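/- For the matrix $A$ of the critical partner model (rows $(-(r_+y_*+1), 2r_-, r_-)$, $(0, -(r_-+2), \lambda)$, $(r_+y_*, 2, -(r_-+\lambda+1))$, with $r_-, r_+, \lambda, y_* > 0$), the sum of the three principal $2\times 2$ minors of $-A$, namely $(r_+y_*+1)(r_-+2) + (r_-+2)(r_-+\lambda+1) - 2\lambda + (r_+y_*+1)(r_-+\lambda+1) - r_- r_+ y_*$, is strictly positive. -/
import Mathlib


/-- For the linearization matrix of the critical partner model, the sum of the
three principal `2×2` minors of `-A` is strictly positive. -/
theorem principal_minors_positive (rm rp lam ys : ℝ) (hrm : 0 < rm) (hrp : 0 < rp)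
    (hlam : 0 < lam) (hys : 0 < ys) :
    0 < (rp*ys+1)*(rm+2) + ((rm+2)*(rm+lam+1) - 2*lam)
        + ((rp*ys+1)*(rm+lam+1) - rm*(rp*ys)) := by
  nlinarith [mul_pos hrp hys, mul_pos hrm hlam, mul_pos (mul_pos hrp hys) hlam]
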